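/- arXiv:2102.09870 — 2 statements merged into one kernel-verified Lean document; each statement's English description precedes it below -/
import Mathlib

section
/- Let p be a prime, let K be a finite extension of ℚ_p with ring of integers O_K, and let L/K be an unramified Galois extension of degree n with p not dividing n, with ring of integers O_L. Let σ be a generator of the cyclic group Gal(L/K) and let k be an integer coprime to n. Let N ⊆ O_L be the O_K-submodule generated by the set {a − σ^{jk}(a) : a ∈ O_L, 0 ≤ j ≤ n−1}. Then O_L = N ⊕ O_K as O_K-modules, where O_K ⊆ O_L is the natural inclusion. -/
/-!
The Galois group `G` of `L/K` acts on `O_L` through `O_L`-automorphisms over `O_K`, and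
`|G| = n` is a unit in `O_K` because `p ∤ n`. Hence averaging over `G` is a projection of
`O_L` onto its `G`-invariants, which are `O_K` since `O_K` is integrally closed and `L/K` is
Galois; its kernel is spanned by the elements `a - τ a`. Since `σ^k` generates `G` as well,
`τ` already ranges over all of `G` when it runs through `σ^(j k)`, `j < n`.
-/

theorem exists_lt_orderOf_pow_mul_eq {G : Type*} [Group G] [Finite G] {σ : G}
    (hσ : ∀ τ, τ ∈ Subgroup.zpowers σ) {m : ℕ} (hm : m.Coprime (orderOf σ)) (τ : G) :
    ∃ j < orderOf σ, σ ^ (j * m) = τ := by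
  obtain ⟨r, hr⟩ := exists_pow_eq_self_of_coprime hm
  obtain ⟨i, rfl : σ ^ i = τ⟩ := mem_powers_iff_mem_zpowers.2 (hσ τ)
  refine ⟨r * i % orderOf σ, Nat.mod_lt _ (orderOf_pos σ), ?_⟩
  conv_rhs => rw [← hr, ← pow_mul, ← pow_mul]
  rw [pow_eq_pow_iff_modEq]
  calc r * i % orderOf σ * m ≡ r * i * m [MOD orderOf σ] := (Nat.mod_modEq _ _).mul_right m
    _ = m * (r * i) := by ring

namespace Representation

variable {k G V : Type*} [CommRing k] [Group G] [AddCommGroup V] [Module k V]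
  (ρ : Representation k G V)

theorem Coinvariants.self_sub_mem_ker (g : G) (v : V) : v - ρ g v ∈ Coinvariants.ker ρ :=
  (Submodule.neg_mem_iff _).1 (by simpa using Coinvariants.sub_mem_ker g v)

section Average

variable [Fintype G] [Invertible (Fintype.card G : k)]

theorem averageMap_apply (v : V) : averageMap ρ v = ⅟(Fintype.card G : k) • ∑ g, ρ g v := by
  simp [GroupAlgebra.average, map_sum]

theorem averageMap_apply_self (g : G) (v : V) : averageMap ρ (ρ g v) = averageMap ρ v := by
  rw [averageMap, ← asAlgebraHom_single_one, ← Module.End.mul_apply, ← map_mul,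
    GroupAlgebra.mul_average_right]

theorem sub_averageMap_mem_coinvariantsKer (v : V) :
    v - averageMap ρ v ∈ Coinvariants.ker ρ := by
  have hsum : ∑ g, (v - ρ g v) = (Fintype.card G : k) • v - ∑ g, ρ g v := by
    rw [Finset.sum_sub_distrib, Finset.sum_const, Finset.card_univ, Nat.cast_smul_eq_nsmul]
  have hv : v - averageMap ρ v = ⅟(Fintype.card G : k) • ∑ g, (v - ρ g v) := by
    rw [hsum, smul_sub, smul_smul, invOf_mul_self, one_smul, averageMap_apply]
  rw [hv]
  exact Submodule.smul_mem _ _ <|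
    Submodule.sum_mem _ fun g _ ↦ Coinvariants.self_sub_mem_ker ρ g v

theorem ker_averageMap : LinearMap.ker (averageMap ρ) = Coinvariants.ker ρ := by
  refine le_antisymm (fun v hv ↦ ?_) (Submodule.span_le.2 ?_)
  · simpa only [LinearMap.mem_ker.1 hv, sub_zero] using sub_averageMap_mem_coinvariantsKer ρ v
  · rintro _ ⟨⟨g, v⟩, rfl⟩
    rw [SetLike.mem_coe, LinearMap.mem_ker, map_sub, averageMap_apply_self, sub_self]

theorem isCompl_coinvariantsKer_invariants : IsCompl (Coinvariants.ker ρ) ρ.invariants :=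
  ker_averageMap ρ ▸ (isProj_averageMap ρ).isCompl.symm

end Average

theorem coinvariantsKer_eq_span_sub_pow_mul [Finite G] {σ : G}
    (hσ : ∀ τ, τ ∈ Subgroup.zpowers σ) {m : ℕ} (hm : m.Coprime (orderOf σ)) :
    Coinvariants.ker ρ = Submodule.span k
      {x | ∃ (v : V) (j : ℕ), j < orderOf σ ∧ x = v - ρ (σ ^ (j * m)) v} := by
  refine le_antisymm (Submodule.span_le.2 ?_) (Submodule.span_le.2 ?_)
  · rintro _ ⟨⟨g, v⟩, rfl⟩
    obtain ⟨j, hj, rfl⟩ := exists_lt_orderOf_pow_mul_eq hσ hm g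
    refine (Submodule.neg_mem_iff _).1 (Submodule.subset_span ⟨v, j, hj, ?_⟩)
    rw [neg_sub]
  · rintro _ ⟨v, j, -, rfl⟩
    exact Coinvariants.self_sub_mem_ker ρ _ v

end Representation

theorem Algebra.IsInvariant.invariants_ofDistribMulAction_eq_range (A B : Type*) [CommRing A]
    [CommRing B] [Algebra A B] [Algebra.IsInvariant A B (B ≃ₐ[A] B)] :
    (Representation.ofDistribMulAction A (B ≃ₐ[A] B) B).invariants =
      LinearMap.range (Algebra.linearMap A B) := by
  ext b
  constructor
  · exact Algebra.IsInvariant.isInvariant b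
  · rintro ⟨a, rfl⟩ g
    exact g.commutes a

theorem IsIntegralClosure.isIntegrallyClosed (R : Type*) {A K : Type*} [CommRing R] [CommRing A]
    [Field K] [Algebra R A] [Algebra A K] [Algebra R K] [IsScalarTower R A K]
    [IsFractionRing A K] [IsIntegralClosure A R K] : IsIntegrallyClosed A :=
  have : Algebra.IsIntegral R A := IsIntegralClosure.isIntegral_algebra R K
  (isIntegrallyClosed_iff K).2 fun hx ↦
    IsIntegralClosure.isIntegral_iff.1 (isIntegral_trans (R := R) _ hx)

theorem PadicInt.isUnit_natCast_of_not_dvd {p : ℕ} [Fact p.Prime] (A : Type*) [CommRing A]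
    [Algebra ℤ_[p] A] {n : ℕ} (hpn : ¬ p ∣ n) : IsUnit (n : A) := by
  have hunit : IsUnit (n : ℤ_[p]) :=
    isUnit_iff.2 (norm_natCast_eq_one_iff.2 ((Nat.Prime.coprime_iff_not_dvd Fact.out).2 hpn))
  simpa using hunit.map (algebraMap ℤ_[p] A)

open Representation in
theorem statement2_general (p : ℕ) [Fact p.Prime]
    (K L : Type*) [Field K] [Field L]
    [Algebra K L] [FiniteDimensional K L] [IsGalois K L]
    (n : ℕ) (hn : Module.finrank K L = n) (hpn : ¬ p ∣ n)
    -- `O_K`, the ring of integers of `K`: the integral closure of `ℤ_p` in `K`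
    (OK : Type*) [CommRing OK] [Algebra OK K] [IsFractionRing OK K]
    [Algebra ℤ_[p] OK] [Algebra ℤ_[p] K]
    [IsScalarTower ℤ_[p] OK K] [IsIntegralClosure OK ℤ_[p] K]
    -- `O_L`, the ring of integers of `L`: the integral closure of `O_K` in `L`
    (OL : Type*) [CommRing OL] [Algebra OL L]
    [Algebra OK OL] [Algebra OK L] [IsScalarTower OK OL L] [IsScalarTower OK K L]
    [IsIntegralClosure OL OK L]
    -- `σ` is a generator of the (cyclic) Galois group `Gal(L/K)`
    (σ : L ≃ₐ[K] L) (hσ : ∀ τ : L ≃ₐ[K] L, τ ∈ Subgroup.zpowers σ)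
    (k : ℕ) (hk : Nat.Coprime k n)
    (N : Submodule OK OL)
    (hN : N = Submodule.span OK
      {x : OL | ∃ (a : OL) (j : ℕ), j < n ∧
        x = a - galRestrict OK K L OL (σ ^ (j * k)) a}) :
    IsCompl N (LinearMap.range (Algebra.linearMap OK OL)) := by
  let g := galRestrict OK K L OL
  have : IsIntegrallyClosed OK := IsIntegralClosure.isIntegrallyClosed ℤ_[p] (K := K)
  have : IsDomain OK := (IsFractionRing.injective OK K).isDomain
  have : IsDomain OL := (IsIntegralClosure.algebraMap_injective OL OK L).isDomain
  have : IsFractionRing OL L := IsIntegralClosure.isFractionRing_of_finite_extension OK K L OL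
  have : Algebra.IsInvariant OK OL (OL ≃ₐ[OK] OL) := Algebra.isInvariant_of_isGalois' OK K L OL
  let _ : Fintype (OL ≃ₐ[OK] OL) := Fintype.ofEquiv _ g.toEquiv
  have hgen : ∀ τ, τ ∈ Subgroup.zpowers (g σ) := fun τ ↦ by
    simpa [MonoidHom.map_zpowers] using Subgroup.mem_map_of_mem g.toMonoidHom (hσ (g.symm τ))
  have hord : orderOf (g σ) = n := by
    rw [orderOf_eq_card_of_forall_mem_zpowers hgen, ← Nat.card_congr g.toEquiv,
      IsGalois.card_aut_eq_finrank, hn]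
  have : Invertible (Fintype.card (OL ≃ₐ[OK] OL) : OK) := by
    rw [Fintype.card_eq_nat_card, ← orderOf_eq_card_of_forall_mem_zpowers hgen, hord]
    exact (PadicInt.isUnit_natCast_of_not_dvd OK hpn).invertible
  let ρ := ofDistribMulAction OK (OL ≃ₐ[OK] OL) OL
  have hNker : N = Coinvariants.ker ρ := by
    rw [hN, ρ.coinvariantsKer_eq_span_sub_pow_mul hgen (hord ▸ hk), hord]
    simp_rw [map_pow (galRestrict OK K L OL)]
    rfl
  rw [hNker, ← Algebra.IsInvariant.invariants_ofDistribMulAction_eq_range]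
  exact isCompl_coinvariantsKer_invariants ρ

/-- Let `K` be a finite extension of `ℚ_p` with ring of integers `O_K`,
and let `L/K` be an unramified Galois extension of degree `n` with `p ∤ n`, with ring
of integers `O_L`.  Let `σ` be a generator of the cyclic group `Gal(L/K)` and `k` an
integer coprime to `n`.  Let `N ⊆ O_L` be the `O_K`-submodule generated by
`{a − σ^{jk}(a) : a ∈ O_L, 0 ≤ j ≤ n−1}` (the Galois group acting on `O_L` via
`galRestrict`).  Then `O_L = N ⊕ O_K` as `O_K`-modules, where `O_K ⊆ O_L` is the
natural inclusion. -/
theorem statement2 (p : ℕ) [Fact p.Prime]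
    (K L : Type*) [Field K] [Field L]
    [Algebra ℚ_[p] K] [FiniteDimensional ℚ_[p] K]
    [Algebra K L] [FiniteDimensional K L] [IsGalois K L]
    (n : ℕ) (hn : Module.finrank K L = n) (hpn : ¬ p ∣ n)
    -- `O_K`, the ring of integers of `K`: the integral closure of `ℤ_p` in `K`
    (OK : Type*) [CommRing OK] [IsLocalRing OK] [Algebra OK K] [IsFractionRing OK K]
    [Algebra ℤ_[p] OK] [Algebra ℤ_[p] K] [IsScalarTower ℤ_[p] ℚ_[p] K]
    [IsScalarTower ℤ_[p] OK K] [IsIntegralClosure OK ℤ_[p] K]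
    -- `O_L`, the ring of integers of `L`: the integral closure of `O_K` in `L`
    (OL : Type*) [CommRing OL] [IsLocalRing OL] [Algebra OL L]
    [Algebra OK OL] [Algebra OK L] [IsScalarTower OK OL L] [IsScalarTower OK K L]
    [IsIntegralClosure OL OK L]
    -- `L/K` is unramified: the ramification index equals `1`
    (hur : Ideal.ramificationIdx'
      (IsLocalRing.maximalIdeal OK) (IsLocalRing.maximalIdeal OL) = 1)
    -- `σ` is a generator of the (cyclic) Galois group `Gal(L/K)`
    (σ : L ≃ₐ[K] L) (hσ : ∀ τ : L ≃ₐ[K] L, τ ∈ Subgroup.zpowers σ)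
    (k : ℕ) (hk : Nat.Coprime k n)
    (N : Submodule OK OL)
    (hN : N = Submodule.span OK
      {x : OL | ∃ (a : OL) (j : ℕ), j < n ∧
        x = a - galRestrict OK K L OL (σ ^ (j * k)) a}) :
    IsCompl N (LinearMap.range (Algebra.linearMap OK OL)) :=
  statement2_general p K L n hn hpn OK OL σ hσ k hk N hN
end

section
/- Let 𝔽_q be a finite field of odd cardinality q with algebraic closure 𝔽̄_q. There exists a point x of the projective line ℙ¹(𝔽̄_q) (the projectivization of 𝔽̄_q²) whose stabilizer under the natural action of GL₂(𝔽_q) is exactly the subgroup of scalar matrices {λ·I : λ ∈ 𝔽_q^×}. Consequently, the image of this stabilizer under the determinant map is the subgroup of squares (𝔽_q^×)², which is a proper subgroup of 𝔽_q^× since q is odd. -/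
/-! Choose `α ∈ 𝔽̄_q` with `1, α, α²` linearly independent over `𝔽_q`: this is possible because
`𝔽̄_q` is infinite while the roots of the finitely many nonzero polynomials of degree `≤ 2` are
finitely many. If `g = (a b; c d)` fixes `[α : 1]`, then `aα + b = (cα + d)α`, i.e.
`cα² + (d - a)α - b = 0`, which forces `b = c = 0` and `a = d`. So the stabilizer is the scalar
matrices, whose determinants are the squares; as `q` is odd, `𝔽_q^×` contains a nonsquare. -/
open Polynomial Matrix

theorem exists_lt_natDegree_minpoly (F K : Type*) [Field F] [Finite F] [Field K] [Infinite K]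
    [Algebra F K] [Algebra.IsIntegral F K] (n : ℕ) :
    ∃ α : K, n < (minpoly F α).natDegree := by
  by_contra! h
  have : Module.Finite F (degreeLT F (n + 1)) := .equiv (degreeLTEquiv F (n + 1)).symm
  have : Finite (degreeLT F (n + 1)) := Module.finite_of_finite F
  have hfin : (⋃ p ∈ (degreeLT F (n + 1) : Set F[X]), p.rootSet K).Finite :=
    (Set.toFinite _).biUnion fun p _ => p.rootSet_finite K
  refine Set.infinite_univ (hfin.subset fun α _ => Set.mem_biUnion (x := minpoly F α) ?_ ?_)
  · exact mem_degreeLT.2 (degree_le_natDegree.trans_lt (by exact_mod_cast Nat.lt_succ_of_le (h α)))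
  · exact mem_rootSet.2 ⟨minpoly.ne_zero (Algebra.IsIntegral.isIntegral α), minpoly.aeval F α⟩

theorem exists_linearIndependent_pow (F K : Type*) [Field F] [Finite F] [Field K] [Infinite K]
    [Algebra F K] [Algebra.IsIntegral F K] (n : ℕ) :
    ∃ α : K, LinearIndependent F fun i : Fin n => α ^ (i : ℕ) := by
  obtain ⟨α, hα⟩ := exists_lt_natDegree_minpoly F K n
  exact ⟨α, (linearIndependent_pow α).comp (Fin.castLE hα.le) (Fin.castLE_injective _)⟩

theorem exists_mulVec_map_eq_smul_iff {F K : Type*} [CommRing F] [CommRing K] [Algebra F K]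
    {α : K} (hα : LinearIndependent F fun i : Fin 3 => α ^ (i : ℕ)) (g : Matrix (Fin 2) (Fin 2) F) :
    (∃ lam : K, (g.map (algebraMap F K)) *ᵥ ![α, 1] = lam • ![α, 1]) ↔ ∃ c : F, g = c • 1 := by
  constructor
  · rintro ⟨lam, h⟩
    have h0 := congrFun h 0
    have h1 := congrFun h 1
    simp only [mulVec, dotProduct, map_apply, Fin.sum_univ_two, cons_val_zero, cons_val_one,
      cons_val_fin_one, mul_one, Pi.smul_apply, smul_eq_mul] at h0 h1
    have key : ∑ i, ![-g 0 1, g 1 1 - g 0 0, g 1 0] i • α ^ (i : ℕ) = 0 := by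
      simp only [Fin.sum_univ_three, Algebra.smul_def, cons_val_zero, cons_val_one, cons_val,
        map_neg, map_sub, Fin.coe_ofNat_eq_mod, Nat.zero_mod, Nat.one_mod, Nat.mod_succ, pow_zero,
        pow_one, mul_one]
      linear_combination -h0 + α * h1
    have hg := Fintype.linearIndependent_iff.1 hα _ key
    simp only [Fin.forall_fin_succ, cons_val_zero, cons_val_succ, cons_val_fin_one, neg_eq_zero,
      sub_eq_zero, forall_const] at hg
    obtain ⟨hb, hd, hc⟩ := hg
    refine ⟨g 0 0, ?_⟩
    ext i j
    fin_cases i <;> fin_cases j <;> simp [hb, hc, hd]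
  · rintro ⟨c, rfl⟩
    refine ⟨algebraMap F K c, ?_⟩
    ext i
    fin_cases i <;> simp [mulVec, dotProduct, Fin.sum_univ_two, mul_comm]

theorem Matrix.isUnit_smul_one_iff {n R : Type*} [Fintype n] [DecidableEq n] [Nonempty n]
    [CommRing R] {c : R} : IsUnit (c • (1 : Matrix n n R)) ↔ IsUnit c := by
  rw [isUnit_iff_isUnit_det, det_smul, det_one, mul_one, isUnit_pow_iff Fintype.card_ne_zero]

/-- Let `𝔽_q` be a finite field of odd cardinality `q`, with algebraic
closure `𝔽̄_q`.  There is a point of `ℙ¹(𝔽̄_q)` (here encoded by a nonzero vector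
`v ∈ 𝔽̄_q²`, well defined up to scalar) whose stabilizer in `GL₂(𝔽_q)` is exactly the
scalar matrices; consequently the image of this stabilizer under the determinant is
the subgroup of squares in `𝔽_q^×`, which is proper since `q` is odd. -/
theorem statement8 (F : Type*) [Field F] [Fintype F] (hq : Odd (Fintype.card F)) :
    ∃ v : Fin 2 → AlgebraicClosure F, v ≠ 0 ∧
      (∀ g : Matrix (Fin 2) (Fin 2) F, IsUnit g →
        ((∃ lam : AlgebraicClosure F,
            (g.map (algebraMap F (AlgebraicClosure F))).mulVec v = lam • v) ↔
          ∃ c : Fˣ, g = (c : F) • (1 : Matrix (Fin 2) (Fin 2) F))) ∧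
      {d : F | ∃ g : Matrix (Fin 2) (Fin 2) F, IsUnit g ∧
          (∃ lam : AlgebraicClosure F,
            (g.map (algebraMap F (AlgebraicClosure F))).mulVec v = lam • v) ∧
          g.det = d} = {d : F | ∃ c : Fˣ, d = (c : F) ^ 2} ∧
      {d : F | ∃ c : Fˣ, d = (c : F) ^ 2} ≠ {d : F | IsUnit d} := by
  obtain ⟨α, hα⟩ := exists_linearIndependent_pow F (AlgebraicClosure F) 3
  have hstab : ∀ g : Matrix (Fin 2) (Fin 2) F, IsUnit g →
      ((∃ lam, (g.map (algebraMap F _)) *ᵥ ![α, 1] = lam • ![α, 1]) ↔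
        ∃ c : Fˣ, g = (c : F) • 1) := fun g hg =>
    (exists_mulVec_map_eq_smul_iff hα g).trans
      ⟨fun ⟨c, hc⟩ => ⟨(isUnit_smul_one_iff.1 (hc ▸ hg)).unit, hc⟩, fun ⟨c, hc⟩ => ⟨c, hc⟩⟩
  refine ⟨![α, 1], fun h => by simpa using congrFun h 1, hstab, ?_, ?_⟩
  · ext d
    constructor
    · rintro ⟨g, hg, hgα, rfl⟩
      obtain ⟨c, rfl⟩ := (hstab g hg).1 hgα
      exact ⟨c, by simp⟩
    · rintro ⟨c, rfl⟩
      have hc : IsUnit ((c : F) • (1 : Matrix (Fin 2) (Fin 2) F)) := isUnit_smul_one_iff.2 c.isUnit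
      exact ⟨_, hc, (hstab _ hc).2 ⟨c, rfl⟩, by simp⟩
  · have hchar : ringChar F ≠ 2 := fun h =>
      Nat.not_even_iff_odd.2 hq (Nat.even_iff.2 (FiniteField.even_card_iff_char_two.1 h))
    obtain ⟨a, ha⟩ := FiniteField.exists_nonsquare hchar
    intro h
    have ha' : a ∈ {d : F | IsUnit d} := isUnit_iff_ne_zero.2 fun h0 => ha (h0 ▸ IsSquare.zero)
    obtain ⟨c, hc⟩ := h ▸ ha'
    exact ha ⟨c, hc.trans (sq _)⟩
end
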